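/- Let φ_m be a curve of multiplicity m with angle function θ of order ord θ (the least i with θ_i ≠ 0) and parallel curve φ_m^δ = φ_m + δn with δ ≠ 0. Then the multiplicity m^δ of φ_m^δ at t = 0 equals: ord θ if ord θ < m; m if ord θ > m, or if ord θ = m and δ ≠ 1/θ_m; and min{i > m : θ_i ≠ 0} if ord θ = m and δ = 1/θ_m. -/

import Mathlib

/-!
Since `n' = -θ' • T`, the parallel curve has velocity `g • T` with
`g t = t^(m-1)/(m-1)! - δ θ'(t)`, whose Taylor coefficients are `g^(i-1)(0) = [i = m] - δ θ_i`.
If `j` is the least index with `δ θ_j ≠ [j = m]`, Hadamard's lemma writes `g = t^(j-1) h` with `h`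
smooth and `h 0 ≠ 0`, and then
`φ^δ(t) - φ^δ(0) = ∫₀ᵗ u^(j-1) h(u) T(u) du = t^j ∫₀¹ s^(j-1) h(ts) T(ts) ds`
exhibits multiplicity `j`. In the three cases of the theorem this least index is `ord θ`, `m`,
and the first index after `m` with `θ_i ≠ 0`, respectively.
-/

open Real MeasureTheory intervalIntegral

/-- A map germ `φ : (ℝ,0) → ℝ²` has multiplicity `m` at `t = 0` if
`φ t − φ 0 = (t^m/m!) • ψ t` for a smooth `ψ` with `ψ 0 ≠ 0`. -/
def HasMultiplicity (φ : ℝ → ℝ × ℝ) (m : ℕ) : Prop :=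
  ∃ ψ : ℝ → ℝ × ℝ, ContDiff ℝ (⊤ : ℕ∞) ψ ∧ ψ 0 ≠ 0 ∧
    ∀ t : ℝ, φ t - φ 0 = (t ^ m / (m.factorial : ℝ)) • ψ t

open scoped ContDiff

section SmoothDivision

variable {E : Type*} [NormedAddCommGroup E] [NormedSpace ℝ E]

theorem hasDerivAt_intervalIntegral_of_contDiff {H : ℝ → ℝ → E}
    (hH : ContDiff ℝ ∞ (Function.uncurry H)) (a b t₀ : ℝ) :
    HasDerivAt (fun t => ∫ s in a..b, H t s)
      (∫ s in a..b, fderiv ℝ (Function.uncurry H) (t₀, s) (1, 0)) t₀ := by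
  set F' : ℝ × ℝ → E := fun p => fderiv ℝ (Function.uncurry H) p (1, 0)
  have hF' : Continuous F' :=
    ((hH.fderiv_right (m := ∞) (by simp)).clm_apply contDiff_const).continuous
  have hslice (t s : ℝ) : HasDerivAt (fun τ => H τ s) (F' (t, s)) t :=
    ((hH.differentiable (by simp) (t, s)).hasFDerivAt.comp_hasDerivAt t
      ((hasDerivAt_id t).prodMk (hasDerivAt_const t s)) :)
  obtain ⟨C, hC⟩ := ((isCompact_closedBall t₀ 1).prod isCompact_uIcc).exists_bound_of_continuousOn
    hF'.continuousOn
  refine (intervalIntegral.hasDerivAt_integral_of_dominated_loc_of_deriv_le (F := H)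
    (bound := fun _ => C) (Metric.ball_mem_nhds t₀ one_pos)
    (.of_forall fun t => (hH.continuous.comp (.prodMk_right t)).aestronglyMeasurable)
    ((hH.continuous.comp (.prodMk_right t₀)).intervalIntegrable a b)
    (hF'.comp (.prodMk_right t₀)).aestronglyMeasurable
    (.of_forall fun s hs t ht =>
      hC (t, s) ⟨Metric.ball_subset_closedBall ht, Set.uIoc_subset_uIcc hs⟩)
    intervalIntegrable_const (.of_forall fun s _ t _ => hslice t s)).2

theorem contDiff_intervalIntegral_of_contDiff {H : ℝ → ℝ → E}
    (hH : ContDiff ℝ ∞ (Function.uncurry H)) (a b : ℝ) :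
    ContDiff ℝ ∞ (fun t => ∫ s in a..b, H t s) := by
  refine contDiff_infty.2 fun n => ?_
  induction n generalizing H with
  | zero =>
    exact contDiff_zero.2 (continuous_parametric_intervalIntegral_of_continuous' hH.continuous a b)
  | succ n ih =>
    have hderiv := hasDerivAt_intervalIntegral_of_contDiff hH a b
    rw [Nat.cast_add_one, contDiff_succ_iff_deriv]
    refine ⟨fun t => (hderiv t).differentiableAt, by simp, ?_⟩
    rw [funext fun t => (hderiv t).deriv]
    exact ih ((hH.fderiv_right (m := ∞) (by simp)).clm_apply contDiff_const)

theorem exists_contDiff_eq_smul_of_eq_zero [CompleteSpace E] {f : ℝ → E} (hf : ContDiff ℝ ∞ f)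
    (hf0 : f 0 = 0) :
    ∃ g : ℝ → E, ContDiff ℝ ∞ g ∧ ∀ t, f t = t • g t := by
  have hf' : ContDiff ℝ ∞ (deriv f) := (contDiff_infty_iff_deriv.1 hf).2
  refine ⟨fun t => ∫ s in (0 : ℝ)..1, deriv f (t * s),
    contDiff_intervalIntegral_of_contDiff (H := fun t s => deriv f (t * s))
      (hf'.comp (contDiff_fst.mul contDiff_snd)) 0 1,
    fun t => ?_⟩
  rw [smul_integral_comp_mul_left, mul_zero, mul_one,
    integral_deriv_eq_sub (fun x _ => hf.differentiable (by simp) x)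
      (hf'.continuous.intervalIntegrable 0 t), hf0, sub_zero]

theorem iteratedDeriv_succ_fun_id_smul_zero {g : ℝ → E} (hg : ContDiff ℝ ∞ g) (i : ℕ) :
    iteratedDeriv (i + 1) (fun t => t • g t) 0 = ((i + 1 : ℕ) : ℝ) • iteratedDeriv i g 0 := by
  have := iteratedDerivWithin_smul (n := i + 1) (f := id) (g := g) (Set.mem_univ (0 : ℝ))
    uniqueDiffOn_univ contDiff_id.contDiffWithinAt
    (hg.of_le (mod_cast le_top)).contDiffWithinAt
  simp only [iteratedDerivWithin_univ] at this
  rw [show (fun t => t • g t) = (id : ℝ → ℝ) • g from rfl, this, Finset.sum_eq_single 1]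
  · simp [iteratedDeriv_id, ← Nat.cast_smul_eq_nsmul ℝ]
  · intro j _ hj
    simp [iteratedDeriv_id, hj]
  · simp

theorem exists_contDiff_eq_pow_smul [CompleteSpace E] {f : ℝ → E} (hf : ContDiff ℝ ∞ f) {k : ℕ}
    (hk : ∀ i < k, iteratedDeriv i f 0 = 0) :
    ∃ g : ℝ → E, ContDiff ℝ ∞ g ∧ g 0 = (k.factorial : ℝ)⁻¹ • iteratedDeriv k f 0 ∧
      ∀ t, f t = t ^ k • g t := by
  induction k generalizing f with
  | zero => exact ⟨f, hf, by simp, by simp⟩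
  | succ k ih =>
    obtain ⟨f₁, hf₁, hff₁⟩ := exists_contDiff_eq_smul_of_eq_zero hf
      (by simpa using hk 0 k.succ_pos)
    have hderiv (i : ℕ) :
        iteratedDeriv (i + 1) f 0 = ((i + 1 : ℕ) : ℝ) • iteratedDeriv i f₁ 0 := by
      rw [funext hff₁, iteratedDeriv_succ_fun_id_smul_zero hf₁]
    obtain ⟨g, hg, hg0, hf₁g⟩ := ih hf₁ fun i hi => by
      simpa [hderiv, Nat.cast_add_one_ne_zero] using hk (i + 1) (by omega)
    refine ⟨g, hg, ?_, fun t => by rw [hff₁, hf₁g, smul_smul, pow_succ']⟩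
    rw [hg0, hderiv, smul_smul, Nat.factorial_succ, Nat.cast_mul]
    congr 1
    field_simp

end SmoothDivision

theorem hasMultiplicity_of_sub_eq_integral_pow_smul {φ W : ℝ → ℝ × ℝ} (hW : ContDiff ℝ ∞ W)
    (hW0 : W 0 ≠ 0) (k : ℕ) (hφ : ∀ t, φ t - φ 0 = ∫ u in (0 : ℝ)..t, u ^ k • W u) :
    HasMultiplicity φ (k + 1) := by
  have hfac : ((k + 1).factorial : ℝ) ≠ 0 := by positivity
  refine ⟨fun t => ((k + 1).factorial : ℝ) • ∫ s in (0 : ℝ)..1, s ^ k • W (t * s), ?_, ?_,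
    fun t => ?_⟩
  · exact (contDiff_intervalIntegral_of_contDiff (H := fun t s => s ^ k • W (t * s))
      ((contDiff_snd.pow k).smul (hW.comp (contDiff_fst.mul contDiff_snd))) 0 1).const_smul _
  · simp [intervalIntegral.integral_smul_const, integral_pow, hW0, hfac, Nat.cast_add_one_ne_zero]
  · calc φ t - φ 0 = t • ∫ s in (0 : ℝ)..1, (t * s) ^ k • W (t * s) := by
          rw [hφ, smul_integral_comp_mul_left (fun u => u ^ k • W u), mul_zero, mul_one]
      _ = (t ^ (k + 1) / ((k + 1).factorial : ℝ)) •
            ((k + 1).factorial : ℝ) • ∫ s in (0 : ℝ)..1, s ^ k • W (t * s) := by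
          rw [smul_smul, div_mul_cancel₀ _ hfac, ← intervalIntegral.integral_smul,
            ← intervalIntegral.integral_smul]
          exact integral_congr fun s _ => by module

theorem hasMultiplicity_of_sub_eq_integral_smul {φ T : ℝ → ℝ × ℝ} {g : ℝ → ℝ}
    (hg : ContDiff ℝ ∞ g) (hT : ContDiff ℝ ∞ T) (hT0 : T 0 ≠ 0) {k : ℕ}
    (hvan : ∀ i < k, iteratedDeriv i g 0 = 0) (hk : iteratedDeriv k g 0 ≠ 0)
    (hφ : ∀ t, φ t - φ 0 = ∫ u in (0 : ℝ)..t, g u • T u) :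
    HasMultiplicity φ (k + 1) := by
  obtain ⟨h, hh, hh0, hgh⟩ := exists_contDiff_eq_pow_smul hg hvan
  refine hasMultiplicity_of_sub_eq_integral_pow_smul (W := fun u => h u • T u) (hh.smul hT)
    ?_ k fun t => by simp_rw [hφ t, hgh, smul_eq_mul, mul_smul]
  simp [hh0, hk, hT0, Nat.factorial_ne_zero]

theorem sub_eq_integral_of_parallel {θ v : ℝ → ℝ} (hθ : ContDiff ℝ 1 θ) (hv : Continuous v)
    (δ : ℝ) {φ : ℝ → ℝ × ℝ}
    (hφ : ∀ t, φ t = (∫ u in (0 : ℝ)..t, v u • (cos (θ u), sin (θ u))) +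
      δ • (-sin (θ t), cos (θ t))) (t : ℝ) :
    φ t - φ 0 = ∫ u in (0 : ℝ)..t, (v u - δ * deriv θ u) • (cos (θ u), sin (θ u)) := by
  have hT : Continuous fun u => (cos (θ u), sin (θ u)) := by fun_prop
  have hθT : Continuous fun u => deriv θ u • (cos (θ u), sin (θ u)) :=
    (hθ.continuous_deriv le_rfl).smul hT
  have hnormal : ∫ u in (0 : ℝ)..t, deriv θ u • (cos (θ u), sin (θ u)) =
      (sin (θ t), -cos (θ t)) - (sin (θ 0), -cos (θ 0)) := by
    refine integral_eq_sub_of_hasDerivAt (f := fun u => (sin (θ u), -cos (θ u))) (fun u _ => ?_)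
      (hθT.intervalIntegrable 0 t)
    have hθu := (hθ.differentiable one_ne_zero u).hasDerivAt
    refine (hθu.sin.prodMk hθu.cos.neg).congr_deriv ?_
    ext <;> simp [mul_comm]
  have hsplit : ∫ u in (0 : ℝ)..t, (v u - δ * deriv θ u) • (cos (θ u), sin (θ u)) =
      (∫ u in (0 : ℝ)..t, v u • (cos (θ u), sin (θ u))) -
        δ • ∫ u in (0 : ℝ)..t, deriv θ u • (cos (θ u), sin (θ u)) := by
    have hvT : Continuous fun u => v u • (cos (θ u), sin (θ u)) := hv.smul hT
    have hδθT : Continuous fun u => δ • deriv θ u • (cos (θ u), sin (θ u)) := hθT.const_smul δ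
    rw [← intervalIntegral.integral_smul, ← integral_sub (hvT.intervalIntegrable 0 t)
      (hδθT.intervalIntegrable 0 t)]
    exact integral_congr fun u _ => by module
  rw [hφ, hφ, integral_same, hsplit, hnormal]
  ext <;> simp <;> ring

theorem iteratedDeriv_pow_div_factorial_sub_mul_deriv_zero {θ : ℝ → ℝ}
    (hθ : ContDiff ℝ ∞ θ) (p i : ℕ) (δ : ℝ) :
    iteratedDeriv i (fun u => u ^ p / (p.factorial : ℝ) - δ * deriv θ u) 0 =
      (if i = p then 1 else 0) - δ * iteratedDeriv (i + 1) θ 0 := by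
  rw [iteratedDeriv_fun_sub (by fun_prop) (contDiffAt_const.mul
      ((contDiff_infty_iff_deriv.1 hθ).2.of_le (mod_cast le_top)).contDiffAt),
    iteratedDeriv_div_const, iteratedDeriv_const_mul_field, iteratedDeriv_fun_pow_zero,
    ← iteratedDeriv_succ']
  split_ifs <;> simp [Nat.factorial_ne_zero]

theorem cos_sin_ne_zero (x : ℝ) : (cos x, sin x) ≠ 0 := fun h => by
  simpa [(Prod.mk_eq_zero.1 h).1, (Prod.mk_eq_zero.1 h).2] using sin_sq_add_cos_sq x

theorem hasMultiplicity_parallel {m : ℕ} (hm : 1 ≤ m) {θ : ℝ → ℝ} (hθ : ContDiff ℝ ∞ θ)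
    {δ : ℝ} {φ : ℝ → ℝ × ℝ}
    (hφ : ∀ t, φ t = (∫ u in (0 : ℝ)..t, (u ^ (m - 1) / ((m - 1).factorial : ℝ)) •
      (cos (θ u), sin (θ u))) + δ • (-sin (θ t), cos (θ t)))
    {j : ℕ} (hj : 1 ≤ j)
    (hvan : ∀ i, 1 ≤ i → i < j → δ * iteratedDeriv i θ 0 = if i = m then 1 else 0)
    (hne : δ * iteratedDeriv j θ 0 ≠ if j = m then 1 else 0) :
    HasMultiplicity φ j := by
  obtain ⟨k, rfl⟩ := Nat.exists_eq_add_of_le' hj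
  have hcoeff (i : ℕ) := iteratedDeriv_pow_div_factorial_sub_mul_deriv_zero hθ (m - 1) i δ
  have hshift (i : ℕ) : (if i = m - 1 then (1 : ℝ) else 0) = if i + 1 = m then 1 else 0 := by
    simp only [show i = m - 1 ↔ i + 1 = m by omega]
  refine hasMultiplicity_of_sub_eq_integral_smul
    (g := fun u => u ^ (m - 1) / ((m - 1).factorial : ℝ) - δ * deriv θ u)
    (((contDiff_id.pow _).div_const _).sub (contDiff_const.mul (contDiff_infty_iff_deriv.1 hθ).2))
    (by fun_prop) (cos_sin_ne_zero (θ 0)) (fun i hi => ?_) ?_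
    (sub_eq_integral_of_parallel (hθ.of_le (mod_cast le_top)) (by fun_prop) δ hφ)
  · rw [hcoeff, hshift, hvan (i + 1) (by omega) (by omega), sub_self]
  · rw [hcoeff, hshift]
    exact sub_ne_zero.2 (Ne.symm hne)

theorem stmt_8_general (m : ℕ) (hm : 1 ≤ m) (δ : ℝ) (hδ : δ ≠ 0)
    (θ : ℝ → ℝ) (hθ : ContDiff ℝ (⊤ : ℕ∞) θ)
    (T N φm φδ : ℝ → ℝ × ℝ)
    (hT : ∀ u, T u = (Real.cos (θ u), Real.sin (θ u)))
    (hN : ∀ u, N u = (-Real.sin (θ u), Real.cos (θ u)))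
    (hφm : ∀ t : ℝ, φm t = ∫ u in (0 : ℝ)..t, (u ^ (m - 1) / ((m - 1).factorial : ℝ)) • T u)
    (hφδ : ∀ t : ℝ, φδ t = φm t + δ • N t)
    (nord : ℕ) (hord1 : 1 ≤ nord)
    (hordne : iteratedDeriv nord θ 0 ≠ 0)
    (hordmin : ∀ i, i < nord → iteratedDeriv i θ 0 = 0) :
    (nord < m → HasMultiplicity φδ nord) ∧
    ((m < nord ∨ (nord = m ∧ δ ≠ (iteratedDeriv m θ 0)⁻¹)) → HasMultiplicity φδ m) ∧
    (∀ j : ℕ, nord = m → δ = (iteratedDeriv m θ 0)⁻¹ →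
      m < j → iteratedDeriv j θ 0 ≠ 0 →
      (∀ i, m < i → i < j → iteratedDeriv i θ 0 = 0) →
      HasMultiplicity φδ j) := by
  have hφ (t : ℝ) : φδ t = (∫ u in (0 : ℝ)..t, (u ^ (m - 1) / ((m - 1).factorial : ℝ)) •
      (cos (θ u), sin (θ u))) + δ • (-sin (θ t), cos (θ t)) := by
    simp only [hφδ, hφm, hT, hN]
  refine ⟨fun hlt => hasMultiplicity_parallel hm hθ hφ hord1 (fun i _ hi => ?_) ?_,
    fun hcase => hasMultiplicity_parallel hm hθ hφ hm (fun i _ hi => ?_) ?_,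
    fun j hnm hδm hmj hj hjmin =>
      hasMultiplicity_parallel hm hθ hφ (by omega) (fun i _ hi => ?_) ?_⟩
  · rw [hordmin i hi, if_neg (by omega), mul_zero]
  · rw [if_neg (by omega)]
    exact mul_ne_zero hδ hordne
  · rw [hordmin i (by rcases hcase with h | ⟨h, _⟩ <;> omega), if_neg (by omega), mul_zero]
  · rw [if_pos rfl]
    rcases hcase with h | ⟨rfl, hne⟩
    · simp [hordmin m h]
    · exact fun h => hne (eq_inv_of_mul_eq_one_left h)
  · subst hnm
    rcases lt_trichotomy i nord with h | rfl | h
    · rw [hordmin i h, if_neg h.ne, mul_zero]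
    · rw [if_pos rfl, hδm, inv_mul_cancel₀ hordne]
    · rw [hjmin i h hi, if_neg h.ne', mul_zero]
  · rw [if_neg (by omega)]
    exact mul_ne_zero hδ hj

/-- the multiplicity `m^δ` at `0` of the parallel curve
`φ_m^δ = φ_m + δ • n` equals `ord θ` if `ord θ < m`; equals `m` if `ord θ > m`, or if
`ord θ = m` and `δ ≠ 1/θ_m`; and equals `min{i > m : θ_i ≠ 0}` if `ord θ = m` and
`δ = 1/θ_m`.  Here `θ_i = iteratedDeriv i θ 0` and `n = ord θ` is the least index with
`θ_n ≠ 0`. -/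
theorem stmt_8 (m : ℕ) (hm : 1 ≤ m) (δ : ℝ) (hδ : δ ≠ 0)
    (θ : ℝ → ℝ) (hθ : ContDiff ℝ (⊤ : ℕ∞) θ) (hθ0 : θ 0 = 0)
    (T N φm φδ : ℝ → ℝ × ℝ)
    (hT : ∀ u, T u = (Real.cos (θ u), Real.sin (θ u)))
    (hN : ∀ u, N u = (-Real.sin (θ u), Real.cos (θ u)))
    (hφm : ∀ t : ℝ, φm t = ∫ u in (0 : ℝ)..t, (u ^ (m - 1) / ((m - 1).factorial : ℝ)) • T u)
    (hφδ : ∀ t : ℝ, φδ t = φm t + δ • N t)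
    (nord : ℕ) (hord1 : 1 ≤ nord)
    (hordne : iteratedDeriv nord θ 0 ≠ 0)
    (hordmin : ∀ i, i < nord → iteratedDeriv i θ 0 = 0) :
    (nord < m → HasMultiplicity φδ nord) ∧
    ((m < nord ∨ (nord = m ∧ δ ≠ (iteratedDeriv m θ 0)⁻¹)) → HasMultiplicity φδ m) ∧
    (∀ j : ℕ, nord = m → δ = (iteratedDeriv m θ 0)⁻¹ →
      m < j → iteratedDeriv j θ 0 ≠ 0 →
      (∀ i, m < i → i < j → iteratedDeriv i θ 0 = 0) →
      HasMultiplicity φδ j) :=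
  stmt_8_general m hm δ hδ θ hθ T N φm φδ hT hN hφm hφδ nord hord1 hordne hordmin
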